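/- Let V(x) = log(1 + e^{-x}) be the logistic loss, σ ≥ 0, β > 0, and Z a standard normal random variable. Define φ(r) = E[V(r + σ√r · Z)] and h(r) = φ(r) + β r for r ≥ 0. If σ² < -4 + 2√6 and β < 1/2 - σ²/8, then h admits a unique minimizer r⋆ on [0, ∞), and r⋆ > 0. -/

import Mathlib

/-!
Write `W_r = r + σ√r Z`, so that `W_r ~ N(r, σ²r)`. Differentiating `φ(r) = E[V(W_r)]` in `r` and
removing the factor `Z` by Stein's lemma `E[Z g(Z)] = E[g'(Z)]` gives
`φ' = E[V'(W_r)] + (σ²/2) E[V''(W_r)]` and `φ'' = E[V'' + σ² V''' + (σ⁴/4) V⁽⁴⁾](W_r)`.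
In terms of the sigmoid `s` and `t = 1 - 2s`, the integrand of `φ''` is
`s(1 - s) ((3σ²t + 4)² + 8 - 3σ⁴) / 24 > 0`, so `h` is strictly convex on `[0, ∞)`.
Since `h(r) ≥ βr`, a minimizer exists, and it is unique by strict convexity; it is not `0`
because `h'(0⁺) = -1/2 + σ²/8 + β < 0`.
-/

open MeasureTheory ProbabilityTheory Real Filter Topology Set
open scoped NNReal

noncomputable section

def logisticLoss (x : ℝ) : ℝ := log (1 + exp (-x))

def logisticLoss₁ (x : ℝ) : ℝ := sigmoid x - 1

def logisticLoss₂ (x : ℝ) : ℝ := sigmoid x * (1 - sigmoid x)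

def logisticLoss₃ (x : ℝ) : ℝ := logisticLoss₂ x * (1 - 2 * sigmoid x)

def logisticLoss₄ (x : ℝ) : ℝ := logisticLoss₂ x * (1 - 6 * sigmoid x + 6 * sigmoid x ^ 2)

lemma hasDerivAt_logisticLoss (x : ℝ) : HasDerivAt logisticLoss (logisticLoss₁ x) x := by
  refine (((hasDerivAt_neg' x).exp.const_add 1).log (by positivity)).congr_deriv ?_
  rw [logisticLoss₁, sigmoid_def]
  field_simp
  ring

lemma hasDerivAt_logisticLoss₁ (x : ℝ) : HasDerivAt logisticLoss₁ (logisticLoss₂ x) x :=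
  (hasDerivAt_sigmoid x).sub_const 1

lemma hasDerivAt_logisticLoss₂ (x : ℝ) : HasDerivAt logisticLoss₂ (logisticLoss₃ x) x := by
  refine ((hasDerivAt_sigmoid x).mul ((hasDerivAt_sigmoid x).const_sub 1)).congr_deriv ?_
  rw [logisticLoss₃, logisticLoss₂]
  ring

lemma hasDerivAt_logisticLoss₃ (x : ℝ) : HasDerivAt logisticLoss₃ (logisticLoss₄ x) x := by
  refine ((hasDerivAt_logisticLoss₂ x).mul
    (((hasDerivAt_sigmoid x).const_mul 2).const_sub 1)).congr_deriv ?_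
  rw [logisticLoss₄, logisticLoss₃, logisticLoss₂]
  ring

lemma continuous_logisticLoss : Continuous logisticLoss :=
  continuous_iff_continuousAt.2 fun x => (hasDerivAt_logisticLoss x).continuousAt

lemma continuous_logisticLoss₁ : Continuous logisticLoss₁ := by
  unfold logisticLoss₁; fun_prop

lemma continuous_logisticLoss₂ : Continuous logisticLoss₂ := by
  unfold logisticLoss₂; fun_prop

lemma continuous_logisticLoss₃ : Continuous logisticLoss₃ := by
  unfold logisticLoss₃ logisticLoss₂; fun_prop

lemma continuous_logisticLoss₄ : Continuous logisticLoss₄ := by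
  unfold logisticLoss₄ logisticLoss₂; fun_prop

lemma logisticLoss_nonneg (x : ℝ) : 0 ≤ logisticLoss x :=
  log_nonneg (by linarith [exp_pos (-x)])

lemma abs_logisticLoss_le (x : ℝ) : |logisticLoss x| ≤ 1 * (1 + |x|) := by
  have hexp : 1 + exp (-x) ≤ exp (1 + |x|) := by
    rw [exp_add]
    nlinarith [add_one_le_exp 1, exp_le_exp.2 (neg_le_abs x), one_le_exp (abs_nonneg x)]
  rw [abs_of_nonneg (logisticLoss_nonneg x), one_mul, ← log_exp (1 + |x|)]
  exact log_le_log (by positivity) hexp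

lemma abs_logisticLoss₁_le (x : ℝ) : |logisticLoss₁ x| ≤ 1 := by
  have := sigmoid_pos x; have := sigmoid_lt_one x
  rw [logisticLoss₁, abs_le]; constructor <;> linarith

lemma abs_logisticLoss₂_le (x : ℝ) : |logisticLoss₂ x| ≤ 1 := by
  have := sigmoid_pos x; have := sigmoid_lt_one x
  rw [logisticLoss₂, abs_le]; constructor <;> nlinarith

lemma abs_logisticLoss₃_le (x : ℝ) : |logisticLoss₃ x| ≤ 1 := by
  have := sigmoid_pos x; have := sigmoid_lt_one x
  have h2 := abs_logisticLoss₂_le x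
  rw [logisticLoss₃, abs_mul]
  have : |1 - 2 * sigmoid x| ≤ 1 := by rw [abs_le]; constructor <;> linarith
  nlinarith [abs_nonneg (logisticLoss₂ x), abs_nonneg (1 - 2 * sigmoid x)]

lemma abs_logisticLoss₄_le (x : ℝ) : |logisticLoss₄ x| ≤ 1 := by
  have := sigmoid_pos x; have := sigmoid_lt_one x
  have hq : 0 ≤ logisticLoss₂ x := mul_nonneg (sigmoid_pos x).le (by linarith)
  have hq' : logisticLoss₂ x ≤ 1 / 4 := by
    rw [logisticLoss₂]; nlinarith [sq_nonneg (2 * sigmoid x - 1)]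
  have : logisticLoss₄ x = logisticLoss₂ x * (1 - 6 * logisticLoss₂ x) := by
    rw [logisticLoss₄, logisticLoss₂]; ring
  rw [this, abs_le]; constructor <;> nlinarith

lemma abs_le_one_mul_one_add_abs {f : ℝ → ℝ} (hf : ∀ x, |f x| ≤ 1) (x : ℝ) :
    |f x| ≤ 1 * (1 + |x|) :=
  (hf x).trans (by simp)

lemma logisticLoss₁_zero : logisticLoss₁ 0 = -1 / 2 := by norm_num [logisticLoss₁, sigmoid_zero]

lemma logisticLoss₂_zero : logisticLoss₂ 0 = 1 / 4 := by norm_num [logisticLoss₂, sigmoid_zero]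

lemma logisticLoss₂_add_mul_add_sq_mul_pos {c : ℝ} (hc : 3 * c ^ 2 < 8) (x : ℝ) :
    0 < logisticLoss₂ x + c * logisticLoss₃ x + c ^ 2 / 4 * logisticLoss₄ x := by
  have h2 : 0 < logisticLoss₂ x := mul_pos (sigmoid_pos x) (sub_pos.2 (sigmoid_lt_one x))
  set t := 1 - 2 * sigmoid x
  have key : logisticLoss₂ x + c * logisticLoss₃ x + c ^ 2 / 4 * logisticLoss₄ x
      = logisticLoss₂ x * (((3 * c * t + 4) ^ 2 + (8 - 3 * c ^ 2)) / 24) := by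
    rw [logisticLoss₃, logisticLoss₄]; ring
  rw [key]
  have := sq_nonneg (3 * c * t + 4)
  positivity

lemma measurable_of_hasDerivAt {g g' : ℝ → ℝ} (hg : ∀ z, HasDerivAt g (g' z) z) :
    Measurable g' := by
  rw [show g' = deriv g from funext fun z => (hg z).deriv.symm]
  exact measurable_deriv g

lemma strictConvexOn_of_hasDerivAt2_pos {D : Set ℝ} (hD : Convex ℝ D) {f f' f'' : ℝ → ℝ}
    (hf : ContinuousOn f D) (hf' : ∀ x ∈ interior D, HasDerivAt f (f' x) x)
    (hf'' : ∀ x ∈ interior D, HasDerivAt f' (f'' x) x) (hpos : ∀ x ∈ interior D, 0 < f'' x) :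
    StrictConvexOn ℝ D f := by
  refine strictConvexOn_of_deriv2_pos hD hf fun x hx => ?_
  have hderiv : deriv f =ᶠ[𝓝 x] f' :=
    eventually_of_mem (isOpen_interior.mem_nhds hx) fun y hy => (hf' y hy).deriv
  rw [Function.iterate_succ_apply, Function.iterate_one, hderiv.deriv_eq, (hf'' x hx).deriv]
  exact hpos x hx

lemma exists_lt_of_hasDerivAt_of_tendsto_neg {g g' : ℝ → ℝ} {a L : ℝ}
    (hg : ContinuousOn g (Ici a)) (hg' : ∀ r > a, HasDerivAt g (g' r) r)
    (hL : Tendsto g' (𝓝[>] a) (𝓝 L)) (hL0 : L < 0) : ∃ r > a, g r < g a := by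
  obtain ⟨u, hau, hneg⟩ := mem_nhdsGT_iff_exists_Ioo_subset.1 (hL.eventually (gt_mem_nhds hL0))
  have hab : a < (a + u) / 2 := by linarith [mem_Ioi.1 hau]
  obtain ⟨c, hc, hslope⟩ := exists_hasDerivAt_eq_slope g g' hab
    (hg.mono Icc_subset_Ici_self) fun x hx => hg' x hx.1
  have : g' c < 0 := hneg ⟨hc.1, hc.2.trans (by linarith [mem_Ioi.1 hau])⟩
  rw [hslope, div_lt_iff₀ (by linarith), zero_mul, sub_neg] at this
  exact ⟨_, hab, this⟩

lemma exists_pos_isMinOn_Ici {g : ℝ → ℝ} (hg : ContinuousOn g (Ici 0))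
    (htop : Tendsto g atTop atTop) (hdesc : ∃ r > 0, g r < g 0) :
    ∃ rs > 0, IsMinOn g (Ici 0) rs := by
  obtain ⟨R, hR⟩ := eventually_atTop.1 (htop.eventually_ge_atTop (g 0))
  have hfar : ∀ᶠ x in cocompact ℝ ⊓ 𝓟 (Ici 0), g 0 ≤ g x := by
    filter_upwards [mem_inf_of_left (isCompact_Icc (a := 0) (b := R)).compl_mem_cocompact,
      mem_inf_of_right (mem_principal_self (Ici (0 : ℝ)))] with x hx hx0
    exact hR x (le_of_lt (not_le.1 fun hxR => hx ⟨hx0, hxR⟩))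
  obtain ⟨rs, hrs, hmin⟩ := hg.exists_isMinOn' isClosed_Ici self_mem_Ici hfar
  obtain ⟨r, hr, hlt⟩ := hdesc
  refine ⟨rs, lt_of_le_of_ne hrs fun h0 => ?_, hmin⟩
  exact (hmin hr.le).not_gt (h0 ▸ hlt)

lemma integrable_const_add_mul_abs_gaussianReal (μ : ℝ) (v : ℝ≥0) (a b : ℝ) :
    Integrable (fun z => a + b * |z|) (gaussianReal μ v) :=
  (integrable_const a).add (((memLp_id_gaussianReal 1).integrable le_rfl).abs.const_mul b)

lemma integrable_gaussianReal_of_abs_le {μ : ℝ} {v : ℝ≥0} {f : ℝ → ℝ} {a b : ℝ}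
    (hf : AEStronglyMeasurable f (gaussianReal μ v)) (hb : ∀ z, |f z| ≤ a + b * |z|) :
    Integrable f (gaussianReal μ v) :=
  (integrable_const_add_mul_abs_gaussianReal μ v a b).mono' hf
    (ae_of_all _ fun z => by simpa [Real.norm_eq_abs] using hb z)

lemma hasDerivAt_gaussianPDFReal_zero_one (x : ℝ) :
    HasDerivAt (gaussianPDFReal 0 1) (-x * gaussianPDFReal 0 1 x) x := by
  have hq : HasDerivAt (fun y : ℝ => -y ^ 2 / 2) (-x) x :=
    ((hasDerivAt_pow 2 x).fun_neg.div_const 2).congr_deriv (by simp; ring)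
  rw [gaussianPDFReal_def]
  simp only [NNReal.coe_one, mul_one, sub_zero]
  exact (hq.exp.const_mul (√(2 * π))⁻¹).congr_deriv (by ring)

lemma integrable_gaussianPDFReal_mul {f : ℝ → ℝ} (hf : Integrable f (gaussianReal 0 1)) :
    Integrable (fun x => gaussianPDFReal 0 1 x * f x) := by
  rw [gaussianReal_of_var_ne_zero 0 one_ne_zero, integrable_withDensity_iff_integrable_smul'
    (measurable_gaussianPDF 0 1) (ae_of_all _ fun _ => gaussianPDF_lt_top)] at hf
  simpa using hf

theorem integral_mul_gaussianReal_eq_integral_deriv {g g' : ℝ → ℝ} {C C' : ℝ}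
    (hg : ∀ z, HasDerivAt g (g' z) z) (hgb : ∀ z, |g z| ≤ C) (hg'b : ∀ z, |g' z| ≤ C') :
    ∫ z, z * g z ∂gaussianReal 0 1 = ∫ z, g' z ∂gaussianReal 0 1 := by
  set p := gaussianPDFReal 0 1
  have hg_cont : Continuous g := continuous_iff_continuousAt.2 fun z => (hg z).continuousAt
  have hint_g : Integrable g (gaussianReal 0 1) :=
    integrable_gaussianReal_of_abs_le hg_cont.aestronglyMeasurable
      (b := 0) fun z => by simpa using hgb z
  have hint_g' : Integrable g' (gaussianReal 0 1) :=
    integrable_gaussianReal_of_abs_le (measurable_of_hasDerivAt hg).aestronglyMeasurable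
      (b := 0) fun z => by simpa using hg'b z
  have hint_zg : Integrable (fun z => z * g z) (gaussianReal 0 1) :=
    integrable_gaussianReal_of_abs_le (a := 0) (b := C)
      (continuous_id.mul hg_cont).aestronglyMeasurable fun z => by
        rw [abs_mul, mul_comm]; simpa using mul_le_mul_of_nonneg_right (hgb z) (abs_nonneg z)
  have hparts := integral_mul_deriv_eq_deriv_mul_of_integrable (u := g) (v := p)
    (fun z _ => hg z) (fun z _ => hasDerivAt_gaussianPDFReal_zero_one z)
    ((integrable_gaussianPDFReal_mul hint_zg).neg.congr (ae_of_all _ fun z => by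
      simp only [Pi.neg_apply, Pi.mul_apply]; ring))
    (by simpa [Pi.mul_def, mul_comm] using integrable_gaussianPDFReal_mul hint_g')
    (by simpa [Pi.mul_def, mul_comm] using integrable_gaussianPDFReal_mul hint_g)
  rw [integral_gaussianReal_eq_integral_smul one_ne_zero,
    integral_gaussianReal_eq_integral_smul one_ne_zero]
  simp only [smul_eq_mul]
  have : ∫ z, g z * (-z * p z) = -∫ z, p z * (z * g z) := by
    rw [← integral_neg]; congr 1; ext z; ring
  rw [this, neg_inj] at hparts
  rw [hparts]; congr 1; ext z; ring

def gaussianSmoothing (σ : ℝ) (f : ℝ → ℝ) (r : ℝ) : ℝ :=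
  ∫ z, f (r + σ * √r * z) ∂gaussianReal 0 1

@[simp]
lemma gaussianSmoothing_zero (σ : ℝ) (f : ℝ → ℝ) : gaussianSmoothing σ f 0 = f 0 := by
  simp [gaussianSmoothing]

lemma abs_comp_add_mul_sqrt_mul_le {f : ℝ → ℝ} {C σ r R : ℝ} (hf : ∀ x, |f x| ≤ C * (1 + |x|))
    (hr : 0 ≤ r) (hrR : r ≤ R) (z : ℝ) :
    |f (r + σ * √r * z)| ≤ C * (1 + R) + C * |σ| * √R * |z| := by
  have hC : 0 ≤ C := by simpa using (abs_nonneg _).trans (hf 0)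
  have hpath : |r + σ * √r * z| ≤ R + |σ| * √R * |z| := by
    calc |r + σ * √r * z| ≤ |r| + |σ| * √r * |z| := by
          simpa [abs_mul, abs_of_nonneg (sqrt_nonneg r)] using abs_add_le r (σ * √r * z)
      _ ≤ R + |σ| * √R * |z| := by
          rw [abs_of_nonneg hr]; gcongr
  calc |f (r + σ * √r * z)| ≤ C * (1 + |r + σ * √r * z|) := hf _
    _ ≤ C * (1 + (R + |σ| * √R * |z|)) := by gcongr
    _ = C * (1 + R) + C * |σ| * √R * |z| := by ring

lemma continuousOn_gaussianSmoothing {f : ℝ → ℝ} {C : ℝ} (σ : ℝ) (hf : Continuous f)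
    (hfb : ∀ x, |f x| ≤ C * (1 + |x|)) : ContinuousOn (gaussianSmoothing σ f) (Ici 0) := by
  intro r₀ hr₀
  have hnear : ∀ᶠ r in 𝓝[Ici 0] r₀, 0 ≤ r ∧ r ≤ r₀ + 1 :=
    eventually_mem_nhdsWithin.and (nhdsWithin_le_nhds (eventually_le_nhds (lt_add_one r₀)))
  refine continuousWithinAt_of_dominated
    (bound := fun z => C * (1 + (r₀ + 1)) + C * |σ| * √(r₀ + 1) * |z|) ?_ ?_
    (integrable_const_add_mul_abs_gaussianReal 0 1 _ _) (ae_of_all _ fun z => ?_)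
  · exact Eventually.of_forall fun r => (by fun_prop : Continuous _).aestronglyMeasurable
  · filter_upwards [hnear] with r hr
    exact ae_of_all _ fun z => abs_comp_add_mul_sqrt_mul_le hfb hr.1 hr.2 z
  · exact (by fun_prop : Continuous fun r => f (r + σ * √r * z)).continuousWithinAt

lemma hasDerivAt_add_mul_sqrt_mul (σ z : ℝ) {r : ℝ} (hr : 0 < r) :
    HasDerivAt (fun x => x + σ * √x * z) (1 + σ / (2 * √r) * z) r :=
  ((hasDerivAt_id r).add (((hasDerivAt_sqrt hr.ne').const_mul σ).mul_const z)).congr_deriv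
    (by field_simp)

lemma integrable_comp_add_mul_sqrt_mul {f : ℝ → ℝ} {C : ℝ} (hf : Continuous f)
    (hfb : ∀ x, |f x| ≤ C) (σ r : ℝ) :
    Integrable (fun z => f (r + σ * √r * z)) (gaussianReal 0 1) :=
  integrable_gaussianReal_of_abs_le (by fun_prop : Continuous _).aestronglyMeasurable
    (b := 0) fun z => by simpa using hfb _

lemma gaussianSmoothing_pos {f : ℝ → ℝ} {σ r : ℝ} (hpos : ∀ x, 0 < f x)
    (hint : Integrable (fun z => f (r + σ * √r * z)) (gaussianReal 0 1)) :
    0 < gaussianSmoothing σ f r := by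
  rw [gaussianSmoothing, integral_pos_iff_support_of_nonneg (fun z => (hpos _).le) hint,
    Function.support_eq_univ fun z => (hpos _).ne']
  simp

lemma hasDerivAt_gaussianSmoothing' {f f' : ℝ → ℝ} {σ C r : ℝ}
    (hf : ∀ x, HasDerivAt f (f' x) x) (hfb : ∀ x, |f x| ≤ C * (1 + |x|))
    (hf'b : ∀ x, |f' x| ≤ C) (hr : 0 < r) :
    HasDerivAt (gaussianSmoothing σ f)
      (∫ z, f' (r + σ * √r * z) * (1 + σ / (2 * √r) * z) ∂gaussianReal 0 1) r := by
  have hC : 0 ≤ C := (abs_nonneg _).trans (hf'b 0)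
  have hf_cont : Continuous f := continuous_iff_continuousAt.2 fun x => (hf x).continuousAt
  have hf'_meas : Measurable f' := measurable_of_hasDerivAt hf
  set c := |σ| / (2 * √(r / 2))
  have hball : ∀ x ∈ Metric.ball r (r / 2), r / 2 < x := fun x hx => by
    rw [Metric.mem_ball, Real.dist_eq] at hx; linarith [neg_abs_le (x - r)]
  have hlocal : ∀ z, ∀ x ∈ Metric.ball r (r / 2),
      ‖f' (x + σ * √x * z) * (1 + σ / (2 * √x) * z)‖ ≤ C * (1 + c * |z|) := by
    intro z x hx
    have hsqrt : 0 < √(r / 2) := sqrt_pos.2 (half_pos hr)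
    have hcx : |σ| / (2 * √x) ≤ c :=
      div_le_div_of_nonneg_left (abs_nonneg σ) (by positivity) (by gcongr; exact (hball x hx).le)
    have hfactor : |1 + σ / (2 * √x) * z| ≤ 1 + c * |z| := by
      calc |1 + σ / (2 * √x) * z| ≤ 1 + |σ| / (2 * √x) * |z| := by
            simpa [abs_mul, abs_div, abs_of_nonneg (sqrt_nonneg x)]
              using abs_add_le 1 (σ / (2 * √x) * z)
        _ ≤ 1 + c * |z| := by gcongr
    rw [Real.norm_eq_abs, abs_mul]
    exact mul_le_mul (hf'b _) hfactor (abs_nonneg _) hC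
  exact (hasDerivAt_integral_of_dominated_loc_of_deriv_le
    (F := fun x z => f (x + σ * √x * z))
    (F' := fun x z => f' (x + σ * √x * z) * (1 + σ / (2 * √x) * z))
    (Metric.ball_mem_nhds r (half_pos hr))
    (Eventually.of_forall fun x => (by fun_prop : Continuous _).aestronglyMeasurable)
    (integrable_gaussianReal_of_abs_le (by fun_prop : Continuous _).aestronglyMeasurable
      (abs_comp_add_mul_sqrt_mul_le hfb hr.le le_rfl))
    ((hf'_meas.comp (by fun_prop)).mul (by fun_prop)).aestronglyMeasurable
    (ae_of_all _ hlocal)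
    (by simpa [mul_add, mul_assoc] using
      integrable_const_add_mul_abs_gaussianReal 0 1 C (C * c))
    (ae_of_all _ fun z x hx => (hf _).comp x
      (hasDerivAt_add_mul_sqrt_mul σ z ((half_pos hr).trans (hball x hx))))).2

lemma integral_mul_comp_add_mul_sqrt_mul {f f' : ℝ → ℝ} {C C' : ℝ}
    (hf : ∀ x, HasDerivAt f (f' x) x) (hfb : ∀ x, |f x| ≤ C) (hf'b : ∀ x, |f' x| ≤ C')
    (σ r : ℝ) :
    ∫ z, z * f (r + σ * √r * z) ∂gaussianReal 0 1 = σ * √r * gaussianSmoothing σ f' r := by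
  have hpath (z : ℝ) : HasDerivAt (fun z => r + σ * √r * z) (σ * √r) z :=
    ((hasDerivAt_id z).const_mul (σ * √r)).const_add r |>.congr_deriv (mul_one _)
  rw [integral_mul_gaussianReal_eq_integral_deriv (g := fun z => f (r + σ * √r * z))
    (fun z => (hf _).comp z (hpath z)) (fun _ => hfb _) (C' := C' * |σ * √r|) fun z => by
      rw [abs_mul]; exact mul_le_mul_of_nonneg_right (hf'b _) (abs_nonneg _)]
  rw [integral_mul_const, gaussianSmoothing, mul_comm]

theorem hasDerivAt_gaussianSmoothing {f f' f'' : ℝ → ℝ} {σ C r : ℝ}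
    (hf : ∀ x, HasDerivAt f (f' x) x) (hf' : ∀ x, HasDerivAt f' (f'' x) x)
    (hfb : ∀ x, |f x| ≤ C * (1 + |x|)) (hf'b : ∀ x, |f' x| ≤ C) (hf''b : ∀ x, |f'' x| ≤ C)
    (hr : 0 < r) :
    HasDerivAt (gaussianSmoothing σ f)
      (gaussianSmoothing σ f' r + σ ^ 2 / 2 * gaussianSmoothing σ f'' r) r := by
  have hf'_cont : Continuous f' := continuous_iff_continuousAt.2 fun x => (hf' x).continuousAt
  have hint_zf' : Integrable (fun z => z * f' (r + σ * √r * z)) (gaussianReal 0 1) :=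
    integrable_gaussianReal_of_abs_le (by fun_prop : Continuous _).aestronglyMeasurable
      (a := 0) (b := C) fun z => by
        rw [abs_mul, mul_comm]; simpa using mul_le_mul_of_nonneg_right (hf'b _) (abs_nonneg z)
  have hsplit : ∫ z, f' (r + σ * √r * z) * (1 + σ / (2 * √r) * z) ∂gaussianReal 0 1
      = gaussianSmoothing σ f' r
        + σ / (2 * √r) * ∫ z, z * f' (r + σ * √r * z) ∂gaussianReal 0 1 := by
    rw [← integral_const_mul, gaussianSmoothing, ← integral_add
      (integrable_comp_add_mul_sqrt_mul hf'_cont hf'b σ r) (hint_zf'.const_mul _)]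
    congr 1; ext z; ring
  refine (hasDerivAt_gaussianSmoothing' hf hfb hf'b hr).congr_deriv ?_
  rw [hsplit, integral_mul_comp_add_mul_sqrt_mul hf' hf'b hf''b]
  have : √r ≠ 0 := (sqrt_pos.2 hr).ne'
  field_simp

lemma gaussianSmoothing_logisticLoss_nonneg (σ r : ℝ) : 0 ≤ gaussianSmoothing σ logisticLoss r :=
  integral_nonneg fun _ => logisticLoss_nonneg _

lemma hasDerivAt_gaussianSmoothing_logisticLoss (σ : ℝ) {r : ℝ} (hr : 0 < r) :
    HasDerivAt (gaussianSmoothing σ logisticLoss)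
      (gaussianSmoothing σ logisticLoss₁ r + σ ^ 2 / 2 * gaussianSmoothing σ logisticLoss₂ r) r :=
  hasDerivAt_gaussianSmoothing hasDerivAt_logisticLoss hasDerivAt_logisticLoss₁
    abs_logisticLoss_le abs_logisticLoss₁_le abs_logisticLoss₂_le hr

lemma hasDerivAt_deriv_gaussianSmoothing_logisticLoss (σ : ℝ) {r : ℝ} (hr : 0 < r) :
    HasDerivAt
      (fun r => gaussianSmoothing σ logisticLoss₁ r
        + σ ^ 2 / 2 * gaussianSmoothing σ logisticLoss₂ r)
      (gaussianSmoothing σ logisticLoss₂ r + σ ^ 2 * gaussianSmoothing σ logisticLoss₃ r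
        + σ ^ 4 / 4 * gaussianSmoothing σ logisticLoss₄ r) r := by
  have h₁ := hasDerivAt_gaussianSmoothing (σ := σ) hasDerivAt_logisticLoss₁
    hasDerivAt_logisticLoss₂ (abs_le_one_mul_one_add_abs abs_logisticLoss₁_le)
    abs_logisticLoss₂_le abs_logisticLoss₃_le hr
  have h₂ := hasDerivAt_gaussianSmoothing (σ := σ) hasDerivAt_logisticLoss₂
    hasDerivAt_logisticLoss₃ (abs_le_one_mul_one_add_abs abs_logisticLoss₂_le)
    abs_logisticLoss₃_le abs_logisticLoss₄_le hr
  exact (h₁.add (h₂.const_mul _)).congr_deriv (by ring)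

lemma gaussianSmoothing_logisticLoss₂_add_pos {σ : ℝ} (hσ : 3 * σ ^ 4 < 8) (r : ℝ) :
    0 < gaussianSmoothing σ logisticLoss₂ r + σ ^ 2 * gaussianSmoothing σ logisticLoss₃ r
      + σ ^ 4 / 4 * gaussianSmoothing σ logisticLoss₄ r := by
  have i₂ := integrable_comp_add_mul_sqrt_mul continuous_logisticLoss₂ abs_logisticLoss₂_le σ r
  have i₃ := integrable_comp_add_mul_sqrt_mul continuous_logisticLoss₃ abs_logisticLoss₃_le σ r
  have i₄ := integrable_comp_add_mul_sqrt_mul continuous_logisticLoss₄ abs_logisticLoss₄_le σ r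
  have hpos := gaussianSmoothing_pos
    (logisticLoss₂_add_mul_add_sq_mul_pos (c := σ ^ 2) (by linarith))
    ((i₂.add (i₃.const_mul _)).add (i₄.const_mul _))
  rwa [gaussianSmoothing, integral_add (f := fun z => logisticLoss₂ (r + σ * √r * z)
      + σ ^ 2 * logisticLoss₃ (r + σ * √r * z)) (i₂.add (i₃.const_mul _)) (i₄.const_mul _),
    integral_add i₂ (i₃.const_mul _), integral_const_mul, integral_const_mul, ← pow_mul] at hpos

theorem strictConvexOn_gaussianSmoothing_logisticLoss {σ : ℝ} (hσ : 3 * σ ^ 4 < 8) :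
    StrictConvexOn ℝ (Ici 0) (gaussianSmoothing σ logisticLoss) := by
  refine strictConvexOn_of_hasDerivAt2_pos (convex_Ici 0)
    (continuousOn_gaussianSmoothing σ continuous_logisticLoss abs_logisticLoss_le)
    (fun r hr => hasDerivAt_gaussianSmoothing_logisticLoss σ ?_)
    (fun r hr => hasDerivAt_deriv_gaussianSmoothing_logisticLoss σ ?_)
    fun r _ => gaussianSmoothing_logisticLoss₂_add_pos hσ r
  all_goals rwa [interior_Ici] at hr

lemma tendsto_deriv_gaussianSmoothing_logisticLoss_zero (σ : ℝ) :
    Tendsto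
      (fun r => gaussianSmoothing σ logisticLoss₁ r
        + σ ^ 2 / 2 * gaussianSmoothing σ logisticLoss₂ r)
      (𝓝[>] 0) (𝓝 (-1 / 2 + σ ^ 2 / 8)) := by
  have h₁ := continuousOn_gaussianSmoothing σ continuous_logisticLoss₁
    (abs_le_one_mul_one_add_abs abs_logisticLoss₁_le) 0 self_mem_Ici
  have h₂ := continuousOn_gaussianSmoothing σ continuous_logisticLoss₂
    (abs_le_one_mul_one_add_abs abs_logisticLoss₂_le) 0 self_mem_Ici
  have h := (h₁.mono Ioi_subset_Ici_self).tendsto.add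
    ((h₂.mono Ioi_subset_Ici_self).tendsto.const_mul (σ ^ 2 / 2))
  convert h using 2
  simp only [gaussianSmoothing_zero, logisticLoss₁_zero, logisticLoss₂_zero]
  ring

theorem stmt2_general (σ β : ℝ) (hσ2 : σ ^ 2 < -4 + 2 * Real.sqrt 6)
    (hβ0 : 0 < β) (hβ1 : β < 1 / 2 - σ ^ 2 / 8)
    (h : ℝ → ℝ)
    (hh : ∀ r, 0 ≤ r → h r =
      (∫ z, Real.log (1 + Real.exp (-(r + σ * Real.sqrt r * z)))
        ∂(gaussianReal 0 1)) + β * r) :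
    ∃ rs : ℝ, 0 < rs ∧ (∀ r, 0 ≤ r → h rs ≤ h r) ∧
      ∀ r, 0 ≤ r → (∀ r', 0 ≤ r' → h r ≤ h r') → r = rs := by
  set g := fun r => gaussianSmoothing σ logisticLoss r + β * r
  have hσ4 : 3 * σ ^ 4 < 8 := by
    nlinarith [sq_sqrt (show (0 : ℝ) ≤ 6 by norm_num), sqrt_nonneg 6, sq_nonneg σ]
  have hcont : ContinuousOn g (Ici 0) :=
    (continuousOn_gaussianSmoothing σ continuous_logisticLoss abs_logisticLoss_le).add
      (continuousOn_const.mul continuousOn_id)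
  have hconv : StrictConvexOn ℝ (Ici 0) g :=
    (strictConvexOn_gaussianSmoothing_logisticLoss hσ4).add_convexOn
      ((convexOn_id (convex_Ici 0)).smul hβ0.le)
  have htop : Tendsto g atTop atTop :=
    tendsto_atTop_mono (fun r => le_add_of_nonneg_left (gaussianSmoothing_logisticLoss_nonneg σ r))
      (tendsto_id.const_mul_atTop hβ0)
  have hdesc : ∃ r > 0, g r < g 0 := exists_lt_of_hasDerivAt_of_tendsto_neg hcont
    (fun r hr => (hasDerivAt_gaussianSmoothing_logisticLoss σ hr).add
      ((hasDerivAt_id r).const_mul β))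
    ((tendsto_deriv_gaussianSmoothing_logisticLoss_zero σ).add_const _) (by linarith)
  obtain ⟨rs, hrs, hmin⟩ := exists_pos_isMinOn_Ici hcont htop hdesc
  refine ⟨rs, hrs, fun r hr => ?_, fun r hr hr_min =>
    hconv.eq_of_isMinOn (fun r' hr' => ?_) hmin hr hrs.le⟩
  · rw [hh r hr, hh rs hrs.le]; exact hmin hr
  · have := hr_min r' hr'
    rwa [hh r hr, hh r' hr'] at this

/-- for the logistic loss `V(x) = log(1 + e^{-x})`, `σ ≥ 0` with
`σ² < -4 + 2√6` and `0 < β < 1/2 - σ²/8`, the function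
`h(r) = E[V(r + σ√r Z)] + βr` on `[0,∞)` has a unique minimizer `r⋆ > 0`. -/
theorem stmt2 (σ β : ℝ) (hσ : 0 ≤ σ) (hσ2 : σ ^ 2 < -4 + 2 * Real.sqrt 6)
    (hβ0 : 0 < β) (hβ1 : β < 1 / 2 - σ ^ 2 / 8)
    (h : ℝ → ℝ)
    (hh : ∀ r, 0 ≤ r → h r =
      (∫ z, Real.log (1 + Real.exp (-(r + σ * Real.sqrt r * z)))
        ∂(gaussianReal 0 1)) + β * r) :
    ∃ rs : ℝ, 0 < rs ∧ (∀ r, 0 ≤ r → h rs ≤ h r) ∧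
      ∀ r, 0 ≤ r → (∀ r', 0 ≤ r' → h r ≤ h r') → r = rs :=
  stmt2_general σ β hσ2 hβ0 hβ1 h hh
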